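/- For the first-order operator metric g of the μ-WDVV system, the Monge metric h, and V = (b, c, (ac−b²+μc²)/(μb−1)): the matrix product g⁻¹·(DV) computed from g^{ij} with g¹¹ = b²μ²−a²μ−2bμ−3, g¹² = a−abμ+bcμ²−cμ, g¹³ = 2b−b²μ+c²μ², g²² = 2b−b²μ+c²μ², g²³ = c(acμ²−2b²μ²+4bμ+c²μ³−3)/(bμ−1), g³³ = (a²c²μ²−2ab²cμ²+4abcμ+2ac³μ³−4ac+b⁴μ²−4b³μ−3b²c²μ³+4b²+6bc²μ²+c⁴μ⁴−5c²μ)/(bμ−1)², satisfies the symmetry condition g^{ik}V^j_k = g^{jk}V^i_k for all i,j ∈ {1,2,3}. -/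

import Mathlib

noncomputable def pd3 : Fin 3 → (ℝ → ℝ → ℝ → ℝ) → (ℝ → ℝ → ℝ → ℝ)
  | 0 => fun F a b c => deriv (fun s => F s b c) a
  | 1 => fun F a b c => deriv (fun s => F a s c) b
  | 2 => fun F a b c => deriv (fun s => F a b s) c

/-- The contravariant metric g^{ij} of the first-order operator of the μ-WDVV system. -/
noncomputable def g (μ : ℝ) (i j : Fin 3) : ℝ → ℝ → ℝ → ℝ :=
  fun a b c =>
    !![b^2*μ^2 - a^2*μ - 2*b*μ - 3,
       a - a*b*μ + b*c*μ^2 - c*μ,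
       2*b - b^2*μ + c^2*μ^2;
       a - a*b*μ + b*c*μ^2 - c*μ,
       2*b - b^2*μ + c^2*μ^2,
       c*(a*c*μ^2 - 2*b^2*μ^2 + 4*b*μ + c^2*μ^3 - 3)/(b*μ - 1);
       2*b - b^2*μ + c^2*μ^2,
       c*(a*c*μ^2 - 2*b^2*μ^2 + 4*b*μ + c^2*μ^3 - 3)/(b*μ - 1),
       (a^2*c^2*μ^2 - 2*a*b^2*c*μ^2 + 4*a*b*c*μ + 2*a*c^3*μ^3 - 4*a*c + b^4*μ^2
         - 4*b^3*μ - 3*b^2*c^2*μ^3 + 4*b^2 + 6*b*c^2*μ^2 + c^4*μ^4 - 5*c^2*μ)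
         /(b*μ - 1)^2] i j

/-- The velocity vector V = (b, c, (ac − b² + μc²)/(μb − 1)). -/
noncomputable def V (μ : ℝ) : Fin 3 → ℝ → ℝ → ℝ → ℝ :=
  fun m a b c => ![b, c, (a*c - b^2 + μ*c^2)/(μ*b - 1)] m

lemma dV2a (μ a b c : ℝ) (h : μ*b - 1 ≠ 0) :
    deriv (fun s => (s*c - b^2 + μ*c^2)/(μ*b - 1)) a = c/(μ*b - 1) := by
  have : (fun s => (s*c - b^2 + μ*c^2)/(μ*b - 1))
      = fun s => s * (c/(μ*b-1)) + (- b^2 + μ*c^2)/(μ*b-1) := by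
    funext s; field_simp; ring
  rw [this]
  rw [deriv_add_const]
  rw [deriv_mul_const (by fun_prop)]
  simp

lemma dV2b (μ a b c : ℝ) (h : μ*b - 1 ≠ 0) :
    deriv (fun s => (a*c - s^2 + μ*c^2)/(μ*s - 1)) b
      = ((-2*b)*(μ*b-1) - (a*c - b^2 + μ*c^2)*μ)/(μ*b-1)^2 := by
  have h1 : HasDerivAt (fun s : ℝ => a*c - s^2 + μ*c^2) (-(2*b)) b := by
    have h0 : HasDerivAt (fun s : ℝ => a*c - s^2 + μ*c^2) (0 - ↑2*b^(2-1) + 0) b :=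
      ((hasDerivAt_const b (a*c)).sub (hasDerivAt_pow 2 b)).add (hasDerivAt_const b (μ*c^2))
    simpa using h0
  have h2 : HasDerivAt (fun s : ℝ => μ*s - 1) μ b := by
    simpa using ((hasDerivAt_id b).const_mul μ).sub_const 1
  have := (h1.div h2 h).deriv
  refine this.trans ?_; ring

lemma dV2c (μ a b c : ℝ) (h : μ*b - 1 ≠ 0) :
    deriv (fun s => (a*s - b^2 + μ*s^2)/(μ*b - 1)) c = (a + 2*μ*c)/(μ*b - 1) := by
  have h1 : HasDerivAt (fun s : ℝ => (a*s - b^2 + μ*s^2)/(μ*b-1))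
      ((a + 2*μ*c)/(μ*b-1)) c := by
    have ha : HasDerivAt (fun s : ℝ => a*s - b^2 + μ*s^2) (a + 2*μ*c) c := by
      have := (((hasDerivAt_id c).const_mul a).sub_const (b^2)).add
        ((hasDerivAt_pow 2 c).const_mul μ)
      exact this.congr_deriv (by norm_num; ring)
    simpa using ha.div_const (μ*b-1)
  exact h1.deriv

lemma pdV (μ : ℝ) (k j : Fin 3) (a b c : ℝ) (h : μ*b - 1 ≠ 0) :
    pd3 k (V μ j) a b c =
      !![0, 0, c/(μ*b - 1);
         1, 0, ((-2*b)*(μ*b-1) - (a*c - b^2 + μ*c^2)*μ)/(μ*b-1)^2;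
         0, 1, (a + 2*μ*c)/(μ*b - 1)] k j := by
  fin_cases k <;> fin_cases j <;>
    simp only [pd3, V, Matrix.cons_val_zero, Matrix.cons_val_one, Matrix.head_cons,
      Matrix.cons_val_two, Matrix.tail_cons, Matrix.of_apply, Matrix.cons_val',
      Matrix.empty_val', Matrix.cons_val_fin_one, Matrix.head_fin_const]
  · simp
  · simp
  · exact dV2a μ a b c h
  · simp
  · simp
  · exact dV2b μ a b c h
  · simp
  · simp
  · exact dV2c μ a b c h

set_option maxHeartbeats 2000000 in
theorem stmt19 (μ : ℝ) (hμ : μ ≠ 0) :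
    ∀ i j : Fin 3, ∀ a b c : ℝ, b * μ ≠ 1 →
      ∑ k : Fin 3, g μ i k a b c * pd3 k (V μ j) a b c =
      ∑ k : Fin 3, g μ j k a b c * pd3 k (V μ i) a b c := by
  intro i j a b c hb
  have h : μ*b - 1 ≠ 0 := by
    intro h'; apply hb; linarith [h']
  have h2 : b*μ - 1 ≠ 0 := by
    intro h'; apply hb; linarith [h']
  fin_cases i <;> fin_cases j <;>
    simp only [Fin.sum_univ_three, pdV μ _ _ a b c h, g, Matrix.cons_val_zero,
      Matrix.cons_val_one, Matrix.head_cons, Matrix.cons_val_two, Matrix.tail_cons,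
      Matrix.of_apply, Matrix.cons_val', Matrix.empty_val', Matrix.cons_val_fin_one,
      Matrix.head_fin_const, Fin.zero_eta, Fin.mk_one, Fin.reduceFinMk] <;>
    field_simp [h, h2] <;> ring
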